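/- (Lemma 3.3, reduced form.) Let c ∈ (0,√2), p ∈ (0,1) with p < p₀, and let k ∈ ℕ, k ≥ 1, be such that κ₂/κ₁ < k. Then the set { θ ∈ ℝ : θ < θ₂ and L(c,p,θ) = m for some positive integer m } is finite and has at most ⌈(k+1)/2⌉ − 1 elements. (Hence there are at most ⌈(k+1)/2⌉ − 1 even one-troughed travelling wave solutions.) -/

import Mathlib

/-!
In the parameters `a = κ₁`, `b = κ₂`, `ξ = a²b²` and `s = √(2 − c²)`, `L` is an affine
combination of the arctangents of two Möbius functions of `θ`. For `p < p₀` one has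
`a² < 1 < b²` and `ξ < 1`, and on `θ < θ₂ = −s/(1 − a²)` neither Möbius denominator vanishes.
There `L'(θ)` is a negative multiple of `ξ²(b² − a²)(1 − ξ)θ²`, so `L` is strictly decreasing
and stays below its limit at `−∞`,
`(1 + b/a)/2 + (arctan (bs/(1 − b²)) − (b/a) arctan (as/(1 − a²)))/π < (1 + b/a)/2 < (k + 1)/2`.
Hence the solutions of `L = m` with `θ < θ₂` are distinct for distinct `m`, and only
`1 ≤ m ≤ ⌊k/2⌋ = ⌈(k + 1)/2⌉ − 1` can occur.
-/

open Real Filter Set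

/-- `ξ = p c⁴ / 4`. -/
noncomputable def xiPar (c p : ℝ) : ℝ := p * c ^ 4 / 4

/-- `κ₁ = √((c² − √(c⁴ − 4ξ))/2)`. -/
noncomputable def kappa1 (c p : ℝ) : ℝ :=
  Real.sqrt ((c ^ 2 - Real.sqrt (c ^ 4 - 4 * xiPar c p)) / 2)

/-- `κ₂ = √((c² + √(c⁴ − 4ξ))/2)`. -/
noncomputable def kappa2 (c p : ℝ) : ℝ :=
  Real.sqrt ((c ^ 2 + Real.sqrt (c ^ 4 - 4 * xiPar c p)) / 2)

/-- The function `L(c,p,θ)` from the paper. -/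
noncomputable def Lfun (c p θ : ℝ) : ℝ :=
  (1 / 2) * (1 + kappa2 c p / kappa1 c p)
  + (1 / Real.pi) * Real.arctan
      ((kappa2 c p * (-(kappa1 c p) ^ 2 + xiPar c p + xiPar c p * θ * Real.sqrt (2 - c ^ 2))) /
       (xiPar c p * (θ * (kappa1 c p) ^ 2 + Real.sqrt (2 - c ^ 2) + θ * (1 - c ^ 2))))
  - (kappa2 c p / (kappa1 c p * Real.pi)) * Real.arctan
      ((kappa1 c p * (-(kappa2 c p) ^ 2 + xiPar c p + xiPar c p * θ * Real.sqrt (2 - c ^ 2))) /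
       (xiPar c p * (θ * (kappa2 c p) ^ 2 + Real.sqrt (2 - c ^ 2) + θ * (1 - c ^ 2))))

/-- The discontinuity point `θ₁ = −2√(2−c²)/(2−c² − c²√(1−p))`. -/
noncomputable def theta1 (c p : ℝ) : ℝ :=
  -2 * Real.sqrt (2 - c ^ 2) / (2 - c ^ 2 - c ^ 2 * Real.sqrt (1 - p))

/-- The discontinuity point `θ₂ = −2√(2−c²)/(2−c² + c²√(1−p))`. -/
noncomputable def theta2 (c p : ℝ) : ℝ :=
  -2 * Real.sqrt (2 - c ^ 2) / (2 - c ^ 2 + c ^ 2 * Real.sqrt (1 - p))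

/-- The threshold `p₀ = 4(c²−1)/c⁴`. -/
noncomputable def p0 (c : ℝ) : ℝ := 4 * (c ^ 2 - 1) / c ^ 4

open Topology

lemma hasDerivAt_arctan_div_linear (α β γ δ : ℝ) {x : ℝ} (hx : γ * x + δ ≠ 0) :
    HasDerivAt (fun y => arctan ((α * y + β) / (γ * y + δ)))
      ((α * δ - β * γ) / ((γ * x + δ) ^ 2 + (α * x + β) ^ 2)) x := by
  have hnum : HasDerivAt (fun y => α * y + β) α x := by
    simpa using ((hasDerivAt_id x).const_mul α).add_const β
  have hden : HasDerivAt (fun y => γ * y + δ) γ x := by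
    simpa using ((hasDerivAt_id x).const_mul γ).add_const δ
  refine (hnum.div hden hx).arctan.congr_deriv ?_
  rw [Pi.div_apply, div_pow, one_add_div (pow_ne_zero 2 hx), one_div_div]
  field_simp
  ring

lemma tendsto_div_linear_atBot (α β γ δ : ℝ) (hγ : γ ≠ 0) :
    Tendsto (fun x => (α * x + β) / (γ * x + δ)) atBot (𝓝 (α / γ)) := by
  have hlim : Tendsto (fun x : ℝ => (α + β * x⁻¹) / (γ + δ * x⁻¹)) atBot
      (𝓝 ((α + β * 0) / (γ + δ * 0))) :=
    ((tendsto_inv_atBot_zero.const_mul β).const_add α).div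
      ((tendsto_inv_atBot_zero.const_mul δ).const_add γ) (by simpa using hγ)
  rw [mul_zero, mul_zero, add_zero, add_zero] at hlim
  refine hlim.congr' ?_
  filter_upwards [eventually_lt_atBot 0] with x hx
  have := hx.ne
  field_simp

lemma finite_and_ncard_le_of_injOn {α : Type*} {S : Set α} {f : α → ℝ} {t : ℕ}
    (hf : InjOn f S) (hS : ∀ x ∈ S, ∃ m : ℕ, 0 < m ∧ m ≤ t ∧ f x = m) :
    S.Finite ∧ S.ncard ≤ t := by
  have hmaps : MapsTo f S (((↑) : ℕ → ℝ) '' Icc 1 t) := fun x hx => by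
    obtain ⟨m, hm0, hmt, hfx⟩ := hS x hx
    exact ⟨m, ⟨hm0, hmt⟩, hfx.symm⟩
  have hfin : (((↑) : ℕ → ℝ) '' Icc 1 t).Finite := (finite_Icc 1 t).image _
  refine ⟨hfin.of_injOn hmaps hf, ?_⟩
  calc S.ncard ≤ (((↑) : ℕ → ℝ) '' Icc 1 t).ncard := ncard_le_ncard_of_injOn f hmaps hf hfin
    _ = t := by rw [ncard_image_of_injective _ Nat.cast_injective, ncard_Icc_nat]; omega

lemma natCast_div_two_lt_ceil (k : ℕ) : ((k / 2 : ℕ) : ℤ) < ⌈((k : ℚ) + 1) / 2⌉ := by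
  rw [Int.lt_ceil]
  have : ((k / 2 : ℕ) : ℚ) * 2 ≤ k := by exact_mod_cast Nat.div_mul_le_self k 2
  rw [Int.cast_natCast]
  linarith

/-- Relations satisfied by `κ₁, κ₂, ξ, √(2 − c²)` when `p < p₀`. In these parameters `L(c, p, ·)`
is `troughL`, with its arctangent arguments written as Möbius functions of `θ`. -/
structure TroughParams (a b ξ s : ℝ) : Prop where
  a_pos : 0 < a
  b_pos : 0 < b
  a_sq_lt_one : a ^ 2 < 1
  one_lt_b_sq : 1 < b ^ 2
  xi_eq : ξ = a ^ 2 * b ^ 2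
  xi_lt_one : ξ < 1
  s_pos : 0 < s
  s_sq : s ^ 2 = 2 - a ^ 2 - b ^ 2

noncomputable def troughL (a b ξ s θ : ℝ) : ℝ :=
  (1 + b / a) / 2
    + arctan ((b * ξ * s * θ + b * (ξ - a ^ 2)) / (ξ * (1 - b ^ 2) * θ + ξ * s)) / π
    - b / a * (arctan ((a * ξ * s * θ + a * (ξ - b ^ 2)) / (ξ * (1 - a ^ 2) * θ + ξ * s)) / π)

namespace TroughParams

variable {a b ξ s : ℝ}

lemma xi_pos (h : TroughParams a b ξ s) : 0 < ξ := by
  have := h.a_pos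
  have := h.b_pos
  rw [h.xi_eq]
  positivity

lemma denominators_sign (h : TroughParams a b ξ s) {θ : ℝ} (hθ : θ < -s / (1 - a ^ 2)) :
    θ < 0 ∧ 0 < ξ * (1 - b ^ 2) * θ + ξ * s ∧ ξ * (1 - a ^ 2) * θ + ξ * s < 0 := by
  have hθ' : θ * (1 - a ^ 2) < -s := (lt_div_iff₀ (by linarith [h.a_sq_lt_one])).mp hθ
  have hθ0 : θ < 0 := by nlinarith [h.a_sq_lt_one, h.s_pos]
  refine ⟨hθ0, ?_, ?_⟩
  · have : 0 < (1 - b ^ 2) * θ + s := by nlinarith [h.one_lt_b_sq, h.s_pos]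
    linarith [mul_pos h.xi_pos this]
  · linarith [mul_neg_of_pos_of_neg h.xi_pos (show θ * (1 - a ^ 2) + s < 0 by linarith)]

lemma exists_hasDerivAt_troughL_neg (h : TroughParams a b ξ s) {θ : ℝ}
    (hθ : θ < -s / (1 - a ^ 2)) : ∃ D, HasDerivAt (troughL a b ξ s) D θ ∧ D < 0 := by
  obtain ⟨hθ0, hd₁, hd₂⟩ := h.denominators_sign hθ
  have h₁ := hasDerivAt_arctan_div_linear (b * ξ * s) (b * (ξ - a ^ 2)) (ξ * (1 - b ^ 2)) (ξ * s)
    hd₁.ne'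
  have h₂ := hasDerivAt_arctan_div_linear (a * ξ * s) (a * (ξ - b ^ 2)) (ξ * (1 - a ^ 2)) (ξ * s)
    hd₂.ne
  refine ⟨_, ((h₁.div_const π).const_add _).sub ((h₂.div_const π).const_mul (b / a)), ?_⟩
  have hξ0 := h.xi_pos
  obtain ⟨ha, hb, ha1, hb1, hξ, hξ1, -, hs2⟩ := h
  set P₁ := (ξ * (1 - b ^ 2) * θ + ξ * s) ^ 2 + (b * ξ * s * θ + b * (ξ - a ^ 2)) ^ 2
  set P₂ := (ξ * (1 - a ^ 2) * θ + ξ * s) ^ 2 + (a * ξ * s * θ + a * (ξ - b ^ 2)) ^ 2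
  have hP₁ : 0 < P₁ := add_pos_of_pos_of_nonneg (pow_pos hd₁ 2) (sq_nonneg _)
  have hP₂ : 0 < P₂ := add_pos_of_pos_of_nonneg (sq_pos_of_neg hd₂) (sq_nonneg _)
  have hW₁ : b * ξ * s * (ξ * s) - b * (ξ - a ^ 2) * (ξ * (1 - b ^ 2))
      = a ^ 2 * b * ξ * (1 - ξ) := by
    linear_combination b * ξ ^ 2 * hs2 + b * ξ * hξ
  have hW₂ : a * ξ * s * (ξ * s) - a * (ξ - b ^ 2) * (ξ * (1 - a ^ 2))
      = a * b ^ 2 * ξ * (1 - ξ) := by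
    linear_combination a * ξ ^ 2 * hs2 + a * ξ * hξ
  have hP : b ^ 2 * P₁ - a ^ 2 * P₂ = ξ ^ 2 * (b ^ 2 - a ^ 2) * (1 - ξ) * θ ^ 2 := by
    subst hξ
    linear_combination (a ^ 4 * b ^ 6 + a ^ 4 * b ^ 8 * θ ^ 2 - a ^ 6 * b ^ 4
      - a ^ 8 * b ^ 4 * θ ^ 2) * hs2
  rw [hW₁, hW₂]
  calc _ = -(b * ξ * (1 - ξ) * (b ^ 2 * P₁ - a ^ 2 * P₂)) / (π * P₁ * P₂) := by
        field_simp
        ring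
    _ < 0 := by
      have hξ' : 0 < 1 - ξ := by linarith
      have hab : 0 < b ^ 2 - a ^ 2 := by linarith
      rw [hP]
      exact div_neg_of_neg_of_pos (neg_neg_of_pos (mul_pos (mul_pos (mul_pos hb hξ0) hξ')
        (mul_pos (mul_pos (mul_pos (pow_pos hξ0 2) hab) hξ') (sq_pos_of_neg hθ0))))
        (by positivity)

lemma strictAntiOn_troughL (h : TroughParams a b ξ s) :
    StrictAntiOn (troughL a b ξ s) (Iio (-s / (1 - a ^ 2))) := by
  refine strictAntiOn_of_deriv_neg (convex_Iio _) (fun θ hθ => ?_) fun θ hθ => ?_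
  · obtain ⟨D, hD, -⟩ := h.exists_hasDerivAt_troughL_neg hθ
    exact hD.continuousAt.continuousWithinAt
  · rw [interior_Iio] at hθ
    obtain ⟨D, hD, hD_neg⟩ := h.exists_hasDerivAt_troughL_neg hθ
    rwa [hD.deriv]

lemma tendsto_troughL_atBot (h : TroughParams a b ξ s) :
    Tendsto (troughL a b ξ s) atBot (𝓝 ((1 + b / a) / 2
      + arctan (b * ξ * s / (ξ * (1 - b ^ 2))) / π
      - b / a * (arctan (a * ξ * s / (ξ * (1 - a ^ 2))) / π))) := by
  have hξ : ξ ≠ 0 := h.xi_pos.ne'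
  have hlim : ∀ {x y : ℝ}, y ≠ 0 → ∀ z, Tendsto (fun θ => arctan ((x * ξ * s * θ + z)
      / (ξ * y * θ + ξ * s))) atBot (𝓝 (arctan (x * ξ * s / (ξ * y)))) := fun hy z =>
    (continuous_arctan.tendsto _).comp (tendsto_div_linear_atBot _ _ _ _ (mul_ne_zero hξ hy))
  exact (((hlim (sub_neg.mpr h.one_lt_b_sq).ne _).div_const π).const_add _).sub
    (((hlim (sub_pos.mpr h.a_sq_lt_one).ne' _).div_const π).const_mul (b / a))

lemma troughL_lt (h : TroughParams a b ξ s) {θ : ℝ} (hθ : θ < -s / (1 - a ^ 2)) :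
    troughL a b ξ s θ < (1 + b / a) / 2 := by
  have hξ : 0 < ξ := h.xi_pos
  have hle := ge_of_tendsto h.tendsto_troughL_atBot <| by
    filter_upwards [eventually_lt_atBot θ] with θ' hθ'
    exact (h.strictAntiOn_troughL (hθ'.trans hθ) hθ hθ').le
  have h₁ : arctan (b * ξ * s / (ξ * (1 - b ^ 2))) / π < 0 :=
    div_neg_of_neg_of_pos (arctan_lt_zero.mpr (div_neg_of_pos_of_neg
      (mul_pos (mul_pos h.b_pos hξ) h.s_pos)
      (mul_neg_of_pos_of_neg hξ (by linarith [h.one_lt_b_sq])))) pi_pos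
  have h₂ : 0 < b / a * (arctan (a * ξ * s / (ξ * (1 - a ^ 2))) / π) :=
    mul_pos (div_pos h.b_pos h.a_pos) (div_pos (arctan_pos.mpr (div_pos
      (mul_pos (mul_pos h.a_pos hξ) h.s_pos)
      (mul_pos hξ (by linarith [h.a_sq_lt_one])))) pi_pos)
  linarith

end TroughParams

lemma sqrt_sub_four_xiPar (c p : ℝ) : √(c ^ 4 - 4 * xiPar c p) = c ^ 2 * √(1 - p) := by
  rw [show c ^ 4 - 4 * xiPar c p = (c ^ 2) ^ 2 * (1 - p) by rw [xiPar]; ring,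
    sqrt_mul (sq_nonneg _), sqrt_sq (sq_nonneg c)]

lemma kappa1_sq {c p : ℝ} (hp : 0 ≤ p) : kappa1 c p ^ 2 = (c ^ 2 - c ^ 2 * √(1 - p)) / 2 := by
  have : √(1 - p) ≤ 1 := sqrt_le_one.mpr (by linarith)
  rw [kappa1, sqrt_sub_four_xiPar, sq_sqrt (by nlinarith [sq_nonneg c])]

lemma kappa2_sq (c p : ℝ) : kappa2 c p ^ 2 = (c ^ 2 + c ^ 2 * √(1 - p)) / 2 := by
  rw [kappa2, sqrt_sub_four_xiPar, sq_sqrt (by positivity)]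

lemma kappa1_sq_add_kappa2_sq {c p : ℝ} (hp : 0 ≤ p) : kappa1 c p ^ 2 + kappa2 c p ^ 2 = c ^ 2 := by
  rw [kappa1_sq hp, kappa2_sq]
  ring

lemma theta2_eq_div {c p : ℝ} (hp : 0 ≤ p) : theta2 c p = -√(2 - c ^ 2) / (1 - kappa1 c p ^ 2) := by
  rw [theta2, kappa1_sq hp, show (1 : ℝ) - (c ^ 2 - c ^ 2 * √(1 - p)) / 2
    = (2 - c ^ 2 + c ^ 2 * √(1 - p)) / 2 by ring, div_div_eq_mul_div]
  ring

lemma Lfun_eq_troughL {c p : ℝ} (hp : 0 ≤ p) :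
    Lfun c p = troughL (kappa1 c p) (kappa2 c p) (xiPar c p) √(2 - c ^ 2) := by
  have hc : 1 - c ^ 2 = 1 - kappa1 c p ^ 2 - kappa2 c p ^ 2 := by
    rw [← kappa1_sq_add_kappa2_sq hp]
    ring
  ext θ
  rw [Lfun, troughL, hc]
  ring_nf

lemma TroughParams.of_lt_p0 {c p : ℝ} (hc : c ∈ Ioo 0 √2) (hp : p ∈ Ioo 0 1) (hpp : p < p0 c) :
    TroughParams (kappa1 c p) (kappa2 c p) (xiPar c p) √(2 - c ^ 2) := by
  obtain ⟨hc0, hc2⟩ := hc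
  obtain ⟨hp0, hp1⟩ := hp
  replace hc2 : c ^ 2 < 2 := (lt_sqrt hc0.le).mp hc2
  have hpc : p * c ^ 4 < 4 * (c ^ 2 - 1) := by rwa [p0, lt_div_iff₀ (by positivity)] at hpp
  have hu0 : 0 < √(1 - p) := sqrt_pos.mpr (by linarith)
  have hu1 : √(1 - p) < 1 := (sqrt_lt' one_pos).mpr (by linarith)
  have hu2 : √(1 - p) ^ 2 = 1 - p := sq_sqrt (by linarith)
  have hkey : 2 - c ^ 2 < c ^ 2 * √(1 - p) := by
    rw [← sqrt_sub_four_xiPar, lt_sqrt (by linarith), xiPar]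
    linarith
  have hc1 : 0 < c ^ 2 * (1 - √(1 - p)) := mul_pos (by positivity) (by linarith)
  refine ⟨sqrt_pos.mpr ?_, sqrt_pos.mpr ?_, ?_, ?_, ?_, ?_, sqrt_pos.mpr (by linarith), ?_⟩
  · rw [sqrt_sub_four_xiPar]
    linarith
  · rw [sqrt_sub_four_xiPar]
    positivity
  · rw [kappa1_sq hp0.le]
    linarith
  · rw [kappa2_sq]
    linarith
  · rw [kappa1_sq hp0.le, kappa2_sq, xiPar]
    linear_combination c ^ 4 / 4 * hu2
  · rw [xiPar]
    nlinarith
  · rw [sq_sqrt (by linarith)]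
    linarith [kappa1_sq_add_kappa2_sq (c := c) hp0.le]

theorem stmt17_general (c p : ℝ) (hc : c ∈ Set.Ioo 0 (Real.sqrt 2)) (hp : p ∈ Set.Ioo 0 1)
    (hpp : p < p0 c) (k : ℕ)
    (hκ : kappa2 c p / kappa1 c p < (k : ℝ)) :
    letI S : Set ℝ := {θ : ℝ | θ < theta2 c p ∧
      ∃ m : ℕ, 0 < m ∧ Lfun c p θ = (m : ℝ)}
    S.Finite ∧ (S.ncard : ℤ) ≤ ⌈((k : ℚ) + 1) / 2⌉ - 1 := by
  have h := TroughParams.of_lt_p0 hc hp hpp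
  rw [Lfun_eq_troughL hp.1.le, theta2_eq_div hp.1.le]
  refine (finite_and_ncard_le_of_injOn (t := k / 2)
    (h.strictAntiOn_troughL.injOn.mono fun θ hθ => hθ.1) ?_).imp_right fun hcard => ?_
  · rintro θ ⟨hθ, m, hm, hLm⟩
    refine ⟨m, hm, ?_, hLm⟩
    have : (2 * m : ℝ) < k + 1 := by linarith [h.troughL_lt hθ]
    have : 2 * m < k + 1 := by exact_mod_cast this
    omega
  · have := natCast_div_two_lt_ceil k
    omega

/-- Lemma 3.3, reduced form: For `c ∈ (0,√2)`, `p ∈ (0,1)` with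
`p < p₀`, and `k ∈ ℕ`, `k ≥ 1`, with `κ₂/κ₁ < k`, the set of `θ < θ₂` with
`L(c,p,θ)` a positive integer is finite with at most `⌈(k+1)/2⌉ − 1` elements. -/
theorem stmt17 (c p : ℝ) (hc : c ∈ Set.Ioo 0 (Real.sqrt 2)) (hp : p ∈ Set.Ioo 0 1)
    (hpp : p < p0 c) (k : ℕ) (hk : 1 ≤ k)
    (hκ : kappa2 c p / kappa1 c p < (k : ℝ)) :
    letI S : Set ℝ := {θ : ℝ | θ < theta2 c p ∧
      ∃ m : ℕ, 0 < m ∧ Lfun c p θ = (m : ℝ)}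
    S.Finite ∧ (S.ncard : ℤ) ≤ ⌈((k : ℚ) + 1) / 2⌉ - 1 :=
  stmt17_general c p hc hp hpp k hκ
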